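/- Assume Assumption A (i) and the volume bound. Then for every A ∈ 𝒜_X with X ⊆ Λ, every t ≥ 0, r > 0 and R ≥ 1: Σ_{Z⊆Λ: Z∩X̃_r ≠ ∅} ∫₀ᵗ ‖[τ^{(<R)}_{t−s,Λ}(A), h_Z^{(≥R)}]‖ ds ≤ 2t‖A‖|X| g(r) f(R). -/

import Mathlib

noncomputable section

open Complex

variable {Ω : Type*} [MetricSpace Ω]
variable {H : Type*} [NormedAddCommGroup H] [InnerProductSpace ℂ H] [CompleteSpace H]

/-- The commutator `[A,B] = AB - BA` of two bounded operators. -/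
def opComm (A B : H →L[ℂ] H) : H →L[ℂ] H := A * B - B * A

/-- The Heisenberg evolution `e^{itK} A e^{-itK}` generated by a bounded operator `K`. -/
def heis (K : H →L[ℂ] H) (t : ℝ) (A : H →L[ℂ] H) : H →L[ℂ] H :=
  NormedSpace.exp ((I * t) • K) * A * NormedSpace.exp ((-(I * t)) • K)

/-- The diameter of a finite subset of a metric space. -/
def fdiam (Z : Finset Ω) : ℝ := Metric.diam (Z : Set Ω)

/-- The distance `d(X,Y) = min {d(x,y) : x ∈ X, y ∈ Y}` between two finite sets. -/
def fsetDist (X Y : Finset Ω) : ℝ := sInf (Set.image2 dist (X : Set Ω) (Y : Set Ω))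

/-- The short-range part `h_Z^{(<R)}` of the interaction: `h_Z` if `diam Z < R`, else `0`. -/
def hlt (h : Finset Ω → (H →L[ℂ] H)) (R : ℝ) (Z : Finset Ω) : H →L[ℂ] H :=
  if fdiam Z < R then h Z else 0

/-- The long-range part `h_Z^{(≥R)} = h_Z - h_Z^{(<R)}`. -/
def hge (h : Finset Ω → (H →L[ℂ] H)) (R : ℝ) (Z : Finset Ω) : H →L[ℂ] H :=
  h Z - hlt h R Z

/-- The Hamiltonian `H_Λ = ∑_{Z ⊆ Λ} h_Z`. -/
def Ham (Λ : Finset Ω) (h : Finset Ω → (H →L[ℂ] H)) : H →L[ℂ] H :=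
  ∑ Z ∈ Λ.powerset, h Z

/-- The `r`-neighborhood `X̃_r = {z ∈ Λ : d(z,X) ≤ r}` of `X` inside `Λ`. -/
def nbhd (Λ X : Finset Ω) (r : ℝ) : Finset Ω :=
  Λ.filter fun z => ∃ x ∈ X, dist z x ≤ r

/-! Conjugation by the unitaries `e^{±itK}` preserves norms, so each commutator in the integrand is
bounded by `2‖A‖‖h_Z^{(≥R)}‖` and the integral by `2t‖A‖‖h_Z^{(≥R)}‖`. Only sets of diameter
`≥ R` contribute; charging each such `Z` to a site of `Z ∩ X̃_r` and applying Assumption A (i) at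
that site bounds the sum of their norms by `|X̃_r| f(R)`, and `X̃_r` is covered by `|X|` balls of
radius `r`, each of at most `g(r)` points. -/

lemma exp_smul_mem_unitary {K : H →L[ℂ] H} (hK : IsSelfAdjoint K) {c : ℂ}
    (hc : (starRingEnd ℂ) c = -c) : NormedSpace.exp (c • K) ∈ unitary (H →L[ℂ] H) := by
  let +nondep : NormedAlgebra ℚ (H →L[ℂ] H) := .restrictScalars ℚ ℂ (H →L[ℂ] H)
  apply NormedSpace.exp_mem_unitary_of_mem_skewAdjoint
  rw [skewAdjoint.mem_iff, star_smul, hK.star_eq, Complex.star_def, hc, neg_smul]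

lemma norm_heis {K : H →L[ℂ] H} (hK : IsSelfAdjoint K) (t : ℝ) (A : H →L[ℂ] H) :
    ‖heis K t A‖ = ‖A‖ := by
  have hU := exp_smul_mem_unitary hK (c := I * t) (by simp)
  have hV := exp_smul_mem_unitary hK (c := -(I * t)) (by simp)
  rw [heis, mul_assoc, CStarRing.norm_mem_unitary_mul _ hU, CStarRing.norm_mul_mem_unitary _ hV]

lemma norm_opComm_le {E : Type*} [NormedAddCommGroup E] [InnerProductSpace ℂ E] (A B : E →L[ℂ] E) :
    ‖opComm A B‖ ≤ 2 * ‖A‖ * ‖B‖ :=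
  calc ‖opComm A B‖ ≤ ‖A‖ * ‖B‖ + ‖B‖ * ‖A‖ :=
        (norm_sub_le _ _).trans (add_le_add (norm_mul_le _ _) (norm_mul_le _ _))
    _ = 2 * ‖A‖ * ‖B‖ := by ring

lemma integral_norm_opComm_heis_le {K : H →L[ℂ] H} (hK : IsSelfAdjoint K) {t : ℝ} (ht : 0 ≤ t)
    (A B : H →L[ℂ] H) :
    ∫ s in (0:ℝ)..t, ‖opComm (heis K (t - s) A) B‖ ≤ 2 * t * ‖A‖ * ‖B‖ := by
  have hbound : ∀ s ∈ Set.uIoc 0 t, ‖‖opComm (heis K (t - s) A) B‖‖ ≤ 2 * ‖A‖ * ‖B‖ :=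
      fun s _ => by
    rw [norm_norm, ← norm_heis hK (t - s) A]
    exact norm_opComm_le _ _
  calc ∫ s in (0:ℝ)..t, ‖opComm (heis K (t - s) A) B‖
      ≤ ‖∫ s in (0:ℝ)..t, ‖opComm (heis K (t - s) A) B‖‖ := Real.le_norm_self _
    _ ≤ 2 * ‖A‖ * ‖B‖ * |t - 0| := intervalIntegral.norm_integral_le_of_norm_le_const hbound
    _ = 2 * t * ‖A‖ * ‖B‖ := by rw [sub_zero, abs_of_nonneg ht]; ring

lemma isSelfAdjoint_ham_hlt {Λ : Finset Ω} {h : Finset Ω → (H →L[ℂ] H)}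
    (hsa : ∀ Z, IsSelfAdjoint (h Z)) (R : ℝ) : IsSelfAdjoint (Ham Λ (hlt h R)) := by
  refine isSelfAdjoint_sum _ fun Z _ => ?_
  unfold hlt
  split_ifs
  exacts [hsa Z, .zero _]

lemma hge_eq_ite {E : Type*} [NormedAddCommGroup E] [InnerProductSpace ℂ E]
    (h : Finset Ω → (E →L[ℂ] E)) (R : ℝ) (Z : Finset Ω) :
    hge h R Z = if R ≤ fdiam Z then h Z else 0 := by
  unfold hge hlt
  by_cases hd : fdiam Z < R
  · rw [if_pos hd, if_neg (not_le.mpr hd), sub_self]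
  · rw [if_neg hd, if_pos (not_lt.mp hd), sub_zero]

namespace Finset

lemma sum_le_sum_sum_filter_mem {α M : Type*} [DecidableEq α] [AddCommMonoid M] [PartialOrder M]
    [IsOrderedAddMonoid M] {S : Finset (Finset α)} {N : Finset α} (hS : ∀ Z ∈ S, Z ∩ N ≠ ∅)
    {w : Finset α → M} (hw : ∀ Z ∈ S, 0 ≤ w Z) :
    ∑ Z ∈ S, w Z ≤ ∑ x ∈ N, ∑ Z ∈ S with x ∈ Z, w Z := by
  calc ∑ Z ∈ S, w Z ≤ ∑ Z ∈ S, ∑ x ∈ N, if x ∈ Z then w Z else 0 := by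
        refine sum_le_sum fun Z hZ => ?_
        obtain ⟨x, hx⟩ := nonempty_of_ne_empty (hS Z hZ)
        obtain ⟨hxZ, hxN⟩ := mem_inter.mp hx
        calc w Z = if x ∈ Z then w Z else 0 := (if_pos hxZ).symm
          _ ≤ _ := single_le_sum (f := fun x => if x ∈ Z then w Z else 0)
              (fun y _ => by split_ifs <;> simp [hw Z hZ]) hxN
    _ = ∑ x ∈ N, ∑ Z ∈ S with x ∈ Z, w Z := by
        rw [sum_comm]
        simp_rw [sum_filter]

end Finset

lemma card_nbhd_le [DecidableEq Ω] {g : ℝ → ℝ} {r : ℝ}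
    (hfin : ∀ x : Ω, {y : Ω | dist x y ≤ r}.Finite)
    (hg : ∀ x : Ω, ({y : Ω | dist x y ≤ r}.ncard : ℝ) ≤ g r) (Λ X : Finset Ω) :
    ((nbhd Λ X r).card : ℝ) ≤ X.card * g r := by
  have hcover : nbhd Λ X r ⊆ X.biUnion fun x => (hfin x).toFinset := by
    intro z hz
    obtain ⟨x, hxX, hzx⟩ := (Finset.mem_filter.mp hz).2
    exact Finset.mem_biUnion.mpr ⟨x, hxX, by simpa [dist_comm] using hzx⟩
  calc ((nbhd Λ X r).card : ℝ) ≤ ∑ x ∈ X, ((hfin x).toFinset.card : ℝ) := by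
        exact_mod_cast (Finset.card_le_card hcover).trans Finset.card_biUnion_le
    _ ≤ ∑ x ∈ X, g r := Finset.sum_le_sum fun x _ => by
        rw [← Set.ncard_eq_toFinset_card _ (hfin x)]
        exact hg x
    _ = X.card * g r := by rw [Finset.sum_const, nsmul_eq_mul]

lemma sum_norm_hge_le {E : Type*} [NormedAddCommGroup E] [InnerProductSpace ℂ E] [DecidableEq Ω]
    {Λ N : Finset Ω} (hN : N ⊆ Λ) {h : Finset Ω → (E →L[ℂ] E)}
    {R F : ℝ} (hf : ∀ x ∈ Λ, ∑ Z ∈ Λ.powerset with x ∈ Z ∧ R ≤ fdiam Z, ‖h Z‖ ≤ F) :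
    ∑ Z ∈ Λ.powerset with Z ∩ N ≠ ∅, ‖hge h R Z‖ ≤ N.card * F := by
  refine (Finset.sum_le_sum_sum_filter_mem (fun Z hZ => (Finset.mem_filter.mp hZ).2)
    fun _ _ => norm_nonneg _).trans ?_
  rw [← nsmul_eq_mul, ← Finset.sum_const]
  refine Finset.sum_le_sum fun x hx => le_trans ?_ (hf x (hN hx))
  simp_rw [hge_eq_ite, apply_ite norm, norm_zero, ← Finset.sum_filter, Finset.filter_filter]
  refine Finset.sum_le_sum_of_subset_of_nonneg ?_ fun _ _ _ => norm_nonneg _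
  exact fun Z => by simp only [Finset.mem_filter]; tauto

theorem statement_4_general
    {Ω : Type*} [MetricSpace Ω] [DecidableEq Ω]
    {H : Type*} [NormedAddCommGroup H] [InnerProductSpace ℂ H] [CompleteSpace H]
    (Λ : Finset Ω)
    (h : Finset Ω → (H →L[ℂ] H))
    (hsa : ∀ Z : Finset Ω, IsSelfAdjoint (h Z))
    -- Assumption A (i)
    (f : ℝ → ℝ) (hfnn : ∀ R, 0 ≤ R → 0 ≤ f R)
    (hf : ∀ R', 0 ≤ R' → ∀ x ∈ Λ,
      ∑ Z ∈ Λ.powerset.filter (fun Z => x ∈ Z ∧ R' ≤ fdiam Z), ‖h Z‖ ≤ f R')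
    -- volume bound
    (g : ℝ → ℝ)
    (hfin : ∀ (x : Ω) (ρ : ℝ), 0 ≤ ρ → ({y : Ω | dist x y ≤ ρ}).Finite)
    (hg : ∀ (x : Ω) (ρ : ℝ), 0 ≤ ρ → (({y : Ω | dist x y ≤ ρ}).ncard : ℝ) ≤ g ρ)
    (X : Finset Ω) (A : H →L[ℂ] H)
    (t r R : ℝ) (ht : 0 ≤ t) (hr : 0 < r) (hR : 1 ≤ R) :
    ∑ Z ∈ Λ.powerset.filter (fun Z => Z ∩ nbhd Λ X r ≠ ∅),
        ∫ s in (0:ℝ)..t, ‖opComm (heis (Ham Λ (hlt h R)) (t - s) A) (hge h R Z)‖ ≤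
      2 * t * ‖A‖ * X.card * g r * f R := by
  have hR0 : 0 ≤ R := zero_le_one.trans hR
  have hK := isSelfAdjoint_ham_hlt (Λ := Λ) hsa R
  calc _ ≤ ∑ Z ∈ Λ.powerset with Z ∩ nbhd Λ X r ≠ ∅, 2 * t * ‖A‖ * ‖hge h R Z‖ :=
        Finset.sum_le_sum fun Z _ => integral_norm_opComm_heis_le hK ht A _
    _ = 2 * t * ‖A‖ * ∑ Z ∈ Λ.powerset with Z ∩ nbhd Λ X r ≠ ∅, ‖hge h R Z‖ :=
        (Finset.mul_sum _ _ _).symm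
    _ ≤ 2 * t * ‖A‖ * ((nbhd Λ X r).card * f R) := by
        gcongr
        exact sum_norm_hge_le (Finset.filter_subset _ _) (hf R hR0)
    _ ≤ 2 * t * ‖A‖ * (X.card * g r * f R) := by
        gcongr
        · exact hfnn R hR0
        · exact card_nbhd_le (fun x => hfin x r hr.le) (fun x => hg x r hr.le) Λ X
    _ = 2 * t * ‖A‖ * X.card * g r * f R := by ring

/-- The bound on the second term of Lemma 3.1: under Assumption A (i) and the volume bound,
`Σ_{Z∩X̃_r ≠ ∅} ∫₀ᵗ ‖[τ^{(<R)}_{t−s,Λ}(A), h_Z^{(≥R)}]‖ ds ≤ 2t‖A‖|X| g(r) f(R)`. -/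
theorem statement_4
    {Ω : Type*} [MetricSpace Ω] [Countable Ω] [DecidableEq Ω]
    {H : Type*} [NormedAddCommGroup H] [InnerProductSpace ℂ H] [CompleteSpace H]
    (Λ : Finset Ω) (𝓐 : Finset Ω → Subalgebra ℂ (H →L[ℂ] H))
    (hmono : ∀ S S' : Finset Ω, S ⊆ S' → 𝓐 S ≤ 𝓐 S')
    (hstar : ∀ S : Finset Ω, ∀ a ∈ 𝓐 S, star a ∈ 𝓐 S)
    (hloc : ∀ S S' : Finset Ω, Disjoint S S' →
      ∀ a ∈ 𝓐 S, ∀ b ∈ 𝓐 S', a * b = b * a)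
    (h : Finset Ω → (H →L[ℂ] H))
    (hmem : ∀ Z : Finset Ω, Z ⊆ Λ → h Z ∈ 𝓐 Z)
    (hsa : ∀ Z : Finset Ω, IsSelfAdjoint (h Z))
    -- Assumption A (i)
    (f : ℝ → ℝ) (hfdec : AntitoneOn f (Set.Ici 0)) (hfnn : ∀ R, 0 ≤ R → 0 ≤ f R)
    (hf : ∀ R', 0 ≤ R' → ∀ x ∈ Λ,
      ∑ Z ∈ Λ.powerset.filter (fun Z => x ∈ Z ∧ R' ≤ fdiam Z), ‖h Z‖ ≤ f R')
    -- volume bound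
    (g : ℝ → ℝ) (hgmono : MonotoneOn g (Set.Ici 0))
    (hfin : ∀ (x : Ω) (ρ : ℝ), 0 ≤ ρ → ({y : Ω | dist x y ≤ ρ}).Finite)
    (hg : ∀ (x : Ω) (ρ : ℝ), 0 ≤ ρ → (({y : Ω | dist x y ≤ ρ}).ncard : ℝ) ≤ g ρ)
    (X : Finset Ω) (hXΛ : X ⊆ Λ) (A : H →L[ℂ] H) (hA : A ∈ 𝓐 X)
    (t r R : ℝ) (ht : 0 ≤ t) (hr : 0 < r) (hR : 1 ≤ R) :
    ∑ Z ∈ Λ.powerset.filter (fun Z => Z ∩ nbhd Λ X r ≠ ∅),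
        ∫ s in (0:ℝ)..t, ‖opComm (heis (Ham Λ (hlt h R)) (t - s) A) (hge h R Z)‖ ≤
      2 * t * ‖A‖ * X.card * g r * f R :=
  statement_4_general Λ h hsa f hfnn hf g hfin hg X A t r R ht hr hR
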